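/- Let f_0,...,f_n be Laurent polynomials over a product S × T^n where S is a smooth projective curve and T^n is the n-torus, with coefficients that are global sections of line bundles L_0,...,L_n on S. If the lattice L_A generated by the differences of the exponent vectors of the f_i's has rank strictly less than n, then the system f_0 = ... = f_n = 0 has no isolated solutions in S × T^n. -/

import Mathlib

/-! Since `L_A` has rank `< n`, there is a nonzero `w ∈ ℤⁿ` orthogonal to `L_A`. Along the
one-parameter subgroup `μ ↦ μ^w` of `Tⁿ` all monomials of `f_i` are rescaled by the same factor
`μ^⟨w, a_{i,0}⟩`, so `(v, ξ) ↦ (v, ξ · μ^w)` preserves the zero set. A Zariski neighbourhood of `ξ`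
contains a basic open set `D(f)` with `f(ξ) ≠ 0`, and `μ ↦ f(ξ · μ^w)` is a nonzero Laurent
polynomial in `μ`; hence for all but finitely many `μ` the point `ξ · μ^w` lies in `D(f)` and,
as `w ≠ 0`, differs from `ξ`. Since `K` is infinite, every neighbourhood of a solution contains
another solution. -/

noncomputable section

/-- An interface for a smooth projective curve `S` over `K`, together with its line
bundles, their global sections, orders of vanishing at points, degrees, and values of
sections at points (in a fixed choice of local trivializations). -/
structure SmoothProjCurve (K : Type*) [Field K] where
  /-- the points of the curve -/
  Point : Type*
  /-- the Zariski topology of the curve -/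
  top : TopologicalSpace Point
  /-- line bundles on the curve -/
  LineBundle : Type*
  /-- the degree of a line bundle -/
  deg : LineBundle → ℤ
  /-- global sections of a line bundle -/
  Sect : LineBundle → Type*
  /-- the zero section -/
  zero : ∀ L, Sect L
  /-- the order of vanishing of a global section at a point (junk at the zero section) -/
  ord : ∀ {L : LineBundle}, Sect L → Point → ℕ
  /-- a nonzero section vanishes at only finitely many points -/
  ord_finite : ∀ {L : LineBundle} (σ : Sect L), σ ≠ zero L → {v | ord σ v ≠ 0}.Finite
  /-- the value of a section at a point, in the chosen trivialization -/
  ev : ∀ {L : LineBundle}, Sect L → Point → K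
  /-- a nonzero section vanishes at `v` exactly when its order at `v` is positive -/
  ev_eq_zero_iff : ∀ {L : LineBundle} (σ : Sect L) (v : Point),
    σ ≠ zero L → (ev σ v = 0 ↔ 0 < ord σ v)

end

noncomputable section

/-- Laurent polynomials in `n` variables over `K`. -/
abbrev LaurentPoly (n : ℕ) (K : Type*) [CommRing K] := AddMonoidAlgebra K (Fin n → ℤ)

/-- The character of the lattice `ℤⁿ` attached to a point of the torus `(K*)ⁿ`. -/
def torusChar (n : ℕ) {K : Type*} [Field K] (ξ : Fin n → Kˣ) :
    Multiplicative (Fin n → ℤ) →* K where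
  toFun a := ((∏ i, ξ i ^ (Multiplicative.toAdd a i) : Kˣ) : K)
  map_one' := by simp
  map_mul' a b := by
    push_cast [← Finset.prod_mul_distrib]
    congr 1
    ext i
    rw [← zpow_add₀ (Units.ne_zero (ξ i))]
    rfl

/-- Evaluation of a Laurent polynomial at a point of the torus. -/
def torusEval (n : ℕ) {K : Type*} [Field K] (ξ : Fin n → Kˣ) : LaurentPoly n K →ₐ[K] K :=
  AddMonoidAlgebra.lift K K (Fin n → ℤ) (torusChar n ξ)

/-- The Zariski topology on the torus `(K*)ⁿ`, induced from the Zariski topology on the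
prime spectrum of the ring of Laurent polynomials. -/
def torusTop (n : ℕ) (K : Type*) [Field K] : TopologicalSpace (Fin n → Kˣ) :=
  TopologicalSpace.induced
    (fun ξ => (⟨RingHom.ker (torusEval n ξ).toRingHom, RingHom.ker_isPrime _⟩ :
      PrimeSpectrum (LaurentPoly n K)))
    inferInstance

/-- `x` is an isolated point of `Z` for the topology `τ`. -/
def IsIsolatedPt {X : Type*} (τ : TopologicalSpace X) (Z : Set X) (x : X) : Prop :=
  x ∈ Z ∧ ∃ U ∈ @nhds X τ x, U ∩ Z ⊆ {x}

/-- The product topology. -/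
def prodTop {X Y : Type*} (τ₁ : TopologicalSpace X) (τ₂ : TopologicalSpace Y) :
    TopologicalSpace (X × Y) :=
  @instTopologicalSpaceProd X Y τ₁ τ₂

end

open scoped Matrix
open LaurentPolynomial Filter

theorem Finset.prod_zpow_eq_zpow_sum {ι G : Type*} [CommGroup G] (s : Finset ι) (f : ι → ℤ)
    (a : G) : ∏ i ∈ s, a ^ f i = a ^ ∑ i ∈ s, f i := by
  simpa [← ofAdd_sum] using (map_prod (zpowersHom G a) (fun i => Multiplicative.ofAdd (f i)) s).symm

theorem Units.infinite_of_infinite (G₀ : Type*) [GroupWithZero G₀] [Infinite G₀] : Infinite G₀ˣ :=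
  unitsEquivNeZero.infinite_iff.mpr (Set.finite_singleton (0 : G₀)).infinite_compl.to_subtype

theorem Units.finite_setOf_zpow_eq_one {K : Type*} [Field K] {m : ℤ} (hm : m ≠ 0) :
    {μ : Kˣ | μ ^ m = 1}.Finite := by
  have : NeZero m.natAbs := ⟨Int.natAbs_ne_zero.mpr hm⟩
  have : Finite (rootsOfUnity m.natAbs K) := inferInstance
  refine (Set.finite_coe_iff.mp this).subset fun μ hμ => ?_
  rw [SetLike.mem_coe, mem_rootsOfUnity, pow_natAbs_eq_one]
  exact hμ

theorem LaurentPolynomial.finite_setOf_eval₂_eq_zero {K : Type*} [Field K] {g : K[T;T⁻¹]}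
    (hg : g ≠ 0) : {μ : Kˣ | eval₂ (RingHom.id K) μ g = 0}.Finite := by
  obtain ⟨m, p, hp⟩ := exists_T_pow g
  have hp0 : p ≠ 0 := by
    rintro rfl
    exact hg (((isUnit_T (m : ℤ)).mul_left_eq_zero).mp (by simpa using hp.symm))
  refine ((Polynomial.finite_setOfPred_isRoot hp0).preimage Units.val_injective.injOn).subset
    fun μ hμ => ?_
  have := congrArg (eval₂ (RingHom.id K) μ) hp
  rw [eval₂_toLaurent, map_mul, hμ.out, zero_mul] at this
  simpa [Polynomial.IsRoot] using this

theorem exists_ne_zero_dotProduct_eq_zero_of_finrank_span_lt {n : ℕ} {S : Set (Fin n → ℤ)}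
    (hS : Module.finrank ℤ (Submodule.span ℤ S) < n) :
    ∃ w : Fin n → ℤ, w ≠ 0 ∧ ∀ s ∈ S, w ⬝ᵥ s = 0 := by
  set W := Submodule.span ℤ S
  let restrict : (Fin n → ℤ) →ₗ[ℤ] W →ₗ[ℤ] ℤ :=
    (LinearMap.lcomp ℤ ℤ W.subtype).comp (dotProductBilin ℤ ℤ)
  obtain ⟨w, hw, hw0⟩ : ∃ w, restrict w = 0 ∧ w ≠ 0 := by
    by_contra! h
    have := LinearMap.finrank_le_finrank_of_injective ((injective_iff_map_eq_zero restrict).mpr h)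
    rw [Module.finrank_linearMap_self, Module.finrank_fin_fun] at this
    omega
  exact ⟨w, hw0, fun s hs => LinearMap.congr_fun hw ⟨s, Submodule.subset_span hs⟩⟩

section Twist

variable {n : ℕ} {G : Type*} [CommGroup G]

def torusTwist (ξ : Fin n → G) (w : Fin n → ℤ) (μ : G) : Fin n → G :=
  fun k => ξ k * μ ^ w k

@[simp]
theorem torusTwist_one (ξ : Fin n → G) (w : Fin n → ℤ) :
    torusTwist ξ w 1 = ξ := by
  ext k
  simp [torusTwist]

theorem prod_torusTwist_zpow (ξ : Fin n → G) (w b : Fin n → ℤ) (μ : G) :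
    ∏ k, torusTwist ξ w μ k ^ b k = (∏ k, ξ k ^ b k) * μ ^ (w ⬝ᵥ b) := by
  simp only [torusTwist, mul_zpow, ← zpow_mul, Finset.prod_mul_distrib, dotProduct,
    Finset.prod_zpow_eq_zpow_sum]

theorem sum_mul_prod_torusTwist_zpow {K ι : Type*} [Field K] [Fintype ι] (c : ι → K)
    (a : ι → Fin n → ℤ) (ξ : Fin n → Kˣ) (w : Fin n → ℤ) (μ : Kˣ) {e : ℤ}
    (he : ∀ j, w ⬝ᵥ a j = e) :
    ∑ j, c j * ((∏ k, torusTwist ξ w μ k ^ a j k : Kˣ) : K) =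
      ((μ ^ e : Kˣ) : K) * ∑ j, c j * ((∏ k, ξ k ^ a j k : Kˣ) : K) := by
  simp only [prod_torusTwist_zpow, he, Units.val_mul, Finset.mul_sum]
  exact Finset.sum_congr rfl fun j _ => by ring

variable {K : Type*} [Field K]

theorem torusEval_apply (ξ : Fin n → Kˣ) (f : LaurentPoly n K) :
    torusEval n ξ f = f.coeff.sum fun b c => c * ((∏ k, ξ k ^ b k : Kˣ) : K) := by
  simp [torusEval, AddMonoidAlgebra.lift_apply, torusChar]

noncomputable def torusTwistPoly (ξ : Fin n → Kˣ) (w : Fin n → ℤ) (f : LaurentPoly n K) :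
    K[T;T⁻¹] :=
  f.coeff.sum fun b c => C (c * ((∏ k, ξ k ^ b k : Kˣ) : K)) * T (w ⬝ᵥ b)

theorem eval₂_torusTwistPoly (ξ : Fin n → Kˣ) (w : Fin n → ℤ) (f : LaurentPoly n K) (μ : Kˣ) :
    eval₂ (RingHom.id K) μ (torusTwistPoly ξ w f) = torusEval n (torusTwist ξ w μ) f := by
  simp only [torusTwistPoly, torusEval_apply, map_finsuppSum, eval₂_C_mul_T, RingHom.id_apply,
    prod_torusTwist_zpow, Units.val_mul, mul_assoc]

theorem eventually_torusEval_torusTwist_ne_zero {ξ : Fin n → Kˣ} {f : LaurentPoly n K}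
    (hf : torusEval n ξ f ≠ 0) (w : Fin n → ℤ) :
    ∀ᶠ μ in cofinite, torusEval n (torusTwist ξ w μ) f ≠ 0 := by
  have hg : torusTwistPoly ξ w f ≠ 0 := fun h => hf <| by
    rw [← torusTwist_one ξ w, ← eval₂_torusTwistPoly, h, map_zero]
  simpa only [eventually_cofinite, not_not, eval₂_torusTwistPoly] using
    finite_setOf_eval₂_eq_zero hg

theorem eventually_torusTwist_ne (ξ : Fin n → Kˣ) {w : Fin n → ℤ} (hw : w ≠ 0) :
    ∀ᶠ μ in cofinite, torusTwist ξ w μ ≠ ξ := by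
  obtain ⟨k, hk⟩ := Function.ne_iff.mp hw
  refine (Units.finite_setOf_zpow_eq_one hk).subset fun μ hμ => ?_
  simpa [torusTwist] using congrFun (not_not.mp hμ) k

theorem exists_torusEval_ne_zero_of_mem_nhds {ξ : Fin n → Kˣ} {U : Set (Fin n → Kˣ)}
    (hU : U ∈ @nhds _ (torusTop n K) ξ) :
    ∃ f, torusEval n ξ f ≠ 0 ∧ ∀ ζ, torusEval n ζ f ≠ 0 → ζ ∈ U := by
  rw [torusTop, nhds_induced, mem_comap] at hU
  obtain ⟨O, hO, hOU⟩ := hU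
  obtain ⟨_, ⟨f, rfl⟩, hξf, hfO⟩ :=
    PrimeSpectrum.isTopologicalBasis_basic_opens.mem_nhds_iff.mp hO
  exact ⟨f, hξf, fun ζ hζ => hOU (hfO hζ)⟩

theorem eventually_torusTwist_mem_of_mem_nhds {ξ : Fin n → Kˣ} {U : Set (Fin n → Kˣ)}
    (hU : U ∈ @nhds _ (torusTop n K) ξ) (w : Fin n → ℤ) :
    ∀ᶠ μ in cofinite, torusTwist ξ w μ ∈ U := by
  obtain ⟨f, hξf, hfU⟩ := exists_torusEval_ne_zero_of_mem_nhds hU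
  exact (eventually_torusEval_torusTwist_ne_zero hξf w).mono fun μ => hfU _

end Twist

theorem no_isolated_solutions_of_small_rank_general (K : Type*) [Field K] [IsAlgClosed K]
    (C : SmoothProjCurve K) (n : ℕ)
    (Lb : Fin (n + 1) → C.LineBundle) (N : Fin (n + 1) → ℕ)
    (σ : ∀ i, Fin (N i + 1) → C.Sect (Lb i))
    (a : ∀ i, Fin (N i + 1) → (Fin n → ℤ))
    -- the lattice generated by the differences of exponent vectors has rank < n:
    (hrk : Module.finrank ℤ
      (Submodule.span ℤ {b : Fin n → ℤ | ∃ i j, b = a i j - a i 0}) < n) :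
    -- then no point of `S × Tⁿ` is an isolated point of the zero set of the system:
    ∀ p : C.Point × (Fin n → Kˣ),
      ¬ IsIsolatedPt (prodTop C.top (torusTop n K))
        {q : C.Point × (Fin n → Kˣ) |
          ∀ i, ∑ j, C.ev (σ i j) q.1 * ((∏ k, q.2 k ^ a i j k : Kˣ) : K) = 0} p := by
  rintro ⟨v, ξ⟩ ⟨hpZ, U, hU, hUZ⟩
  obtain ⟨w, hw0, hw⟩ := exists_ne_zero_dotProduct_eq_zero_of_finrank_span_lt hrk
  let := C.top
  let := torusTop n K
  obtain ⟨U₁, hU₁, U₂, hU₂, hU₁₂⟩ := mem_nhds_prod_iff.mp hU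
  have := Units.infinite_of_infinite K
  obtain ⟨μ, hμU, hμξ⟩ :=
    ((eventually_torusTwist_mem_of_mem_nhds hU₂ w).and (eventually_torusTwist_ne ξ hw0)).exists
  suffices hZ : ∀ i, ∑ j, C.ev (σ i j) v * ((∏ k, torusTwist ξ w μ k ^ a i j k : Kˣ) : K) = 0 from
    hμξ (congrArg Prod.snd (@hUZ (v, torusTwist ξ w μ) ⟨hU₁₂ ⟨mem_of_mem_nhds hU₁, hμU⟩, hZ⟩))
  intro i
  have he (j) : w ⬝ᵥ a i j = w ⬝ᵥ a i 0 :=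
    sub_eq_zero.mp (by rw [← dotProduct_sub]; exact hw _ ⟨i, j, rfl⟩)
  rw [sum_mul_prod_torusTwist_zpow _ _ ξ w μ he, hpZ i, mul_zero]

theorem no_isolated_solutions_of_small_rank (K : Type*) [Field K] [IsAlgClosed K]
    (C : SmoothProjCurve K) (n : ℕ)
    (Lb : Fin (n + 1) → C.LineBundle) (N : Fin (n + 1) → ℕ)
    (σ : ∀ i, Fin (N i + 1) → C.Sect (Lb i))
    (a : ∀ i, Fin (N i + 1) → (Fin n → ℤ))
    (hσ : ∀ i j, σ i j ≠ C.zero (Lb i))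
    -- the lattice generated by the differences of exponent vectors has rank < n:
    (hrk : Module.finrank ℤ
      (Submodule.span ℤ {b : Fin n → ℤ | ∃ i j, b = a i j - a i 0}) < n) :
    -- then no point of `S × Tⁿ` is an isolated point of the zero set of the system:
    ∀ p : C.Point × (Fin n → Kˣ),
      ¬ IsIsolatedPt (prodTop C.top (torusTop n K))
        {q : C.Point × (Fin n → Kˣ) |
          ∀ i, ∑ j, C.ev (σ i j) q.1 * ((∏ k, q.2 k ^ a i j k : Kˣ) : K) = 0} p :=
  no_isolated_solutions_of_small_rank_general K C n Lb N σ a hrk
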